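/- Let S be the formal power series with S(0)=1 satisfying S = e^{z(1+S)}. Then z·S(z) = (z·T) ∘ (z·e^z) where T = e^{zT}, and z·S is pseudo-involutory: its compositional inverse equals -(-z)·S(-z). -/

import Mathlib

open PowerSeries

/-- Composition `f ∘ g` of formal power series (meaningful when the constant
coefficient of `g` is zero). -/
noncomputable def comp (f g : PowerSeries ℚ) : PowerSeries ℚ :=
  PowerSeries.mk fun n =>
    ∑ i ∈ Finset.range (n + 1), (PowerSeries.coeff (R := ℚ) i f) * (PowerSeries.coeff (R := ℚ) n (g ^ i))

/-- A formal power series `f` is pseudo-involutory when its compositional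
inverse is `-f(-z)`. -/
def PseudoInvolutory (f : PowerSeries ℚ) : Prop :=
  comp f (-(comp f (-X))) = X ∧ comp (-(comp f (-X))) f = X

/-!
Write `f ∘ g` for `subst g f`, `B = X e^X`, its conjugate `B̄ = X e^{-X}`, and `W = X T`.
The equation `T = e^{XT}` says exactly that `B̄ ∘ W = X`; since `B̄` has linear coefficient `1`,
also `W ∘ B̄ = X`. The equation for `S` gives `S = e^X e^{XS}`,
hence `B̄ ∘ (X S) = X S e^{-XS} = B`, and applying `W` yields `X S = W ∘ B`. The conjugate of
`W ∘ B` is `W̄ ∘ B̄`, and conjugating `B̄ ∘ W = X` gives `B ∘ W̄ = X`, so both composites of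
`W ∘ B` with `W̄ ∘ B̄` collapse to `X`.

The law `e^{a+b} = e^a e^b` for substituted series follows from `e^{a+b} e^{-a} e^{-b}` having
derivative zero; `comp` agrees with `subst` on series with zero constant term.
-/

namespace PowerSeries

section CommRing

variable {R : Type*} [CommRing R]

theorem constantCoeff_subst_of_constantCoeff_zero {g : R⟦X⟧} (hg : constantCoeff g = 0)
    (f : R⟦X⟧) : constantCoeff (subst g f) = constantCoeff f := by
  rw [← coeff_zero_eq_constantCoeff_apply, coeff_subst' (.of_constantCoeff_zero' hg),
    finsum_eq_single _ 0 fun d hd => by simp [zero_pow hd, hg]]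
  simp

theorem HasSubst.subst {a b : R⟦X⟧} (ha : HasSubst a) (hb : HasSubst b) :
    HasSubst (subst b a) := by
  simpa [coe_substAlgHom] using ha.comp hb

theorem hasSubst_neg_X : HasSubst (-X : R⟦X⟧) :=
  .of_constantCoeff_zero' (by simp)

theorem subst_X_mul {g : R⟦X⟧} (hg : HasSubst g) (f : R⟦X⟧) :
    subst g (X * f) = g * subst g f := by
  rw [subst_mul hg, subst_X hg]

theorem subst_neg {g : R⟦X⟧} (hg : HasSubst g) (f : R⟦X⟧) :
    subst g (-f) = -subst g f := by
  rw [← coe_substAlgHom hg, map_neg]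

theorem subst_subst_neg_X {g : R⟦X⟧} (hg : HasSubst g) (f : R⟦X⟧) :
    subst g (subst (-X : R⟦X⟧) f) = subst (-g) f := by
  rw [subst_comp_subst_apply hasSubst_neg_X hg, subst_neg hg, subst_X hg]

/-- A right inverse `g` of `f` coincides with the two-sided inverse `substInvOfIsUnit f`. -/
theorem subst_eq_X_of_subst_eq_X {f g : R⟦X⟧} (hf : constantCoeff f = 0)
    (hf₁ : IsUnit (coeff 1 f)) (hg : HasSubst g) (h : subst g f = X) : subst f g = X := by
  set Q := f.substInvOfIsUnit hf₁
  have hQ : Q = g := calc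
    Q = subst (subst g f) Q := by rw [h, X_subst]
    _ = subst g (subst f Q) := (subst_comp_subst_apply (.of_constantCoeff_zero' hf) hg Q).symm
    _ = g := by rw [subst_substInvOfIsUnit_left f hf hf₁, subst_X hg]
  rw [← hQ, subst_substInvOfIsUnit_left f hf hf₁]

theorem eq_subst_of_subst_eq_X {f g h k : R⟦X⟧} (hf : HasSubst f) (hg : HasSubst g)
    (hk : subst g h = X) (hfg : subst f g = k) : f = subst k h := by
  rw [← hfg, ← subst_comp_subst_apply hg hf, hk, subst_X hf]

/-- The conjugate `f̄ = (-X) ∘ f ∘ (-X)`. -/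
noncomputable def negConj (f : R⟦X⟧) : R⟦X⟧ :=
  -subst (-X : R⟦X⟧) f

theorem constantCoeff_negConj (f : R⟦X⟧) : constantCoeff (negConj f) = -constantCoeff f := by
  rw [negConj, map_neg, constantCoeff_subst_of_constantCoeff_zero (by simp)]

theorem HasSubst.negConj {g : R⟦X⟧} (hg : HasSubst g) : HasSubst (negConj g) := by
  simpa [HasSubst, ← constantCoeff.eq_def, constantCoeff_negConj] using hg.neg

theorem negConj_X : negConj (X : R⟦X⟧) = X := by
  rw [negConj, subst_X hasSubst_neg_X, neg_neg]

theorem negConj_X_mul (f : R⟦X⟧) : negConj (X * f) = X * subst (-X : R⟦X⟧) f := by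
  rw [negConj, subst_X_mul hasSubst_neg_X, neg_mul, neg_neg]

theorem negConj_subst {g : R⟦X⟧} (hg : HasSubst g) (f : R⟦X⟧) :
    negConj (subst g f) = subst (negConj g) (negConj f) := by
  rw [negConj.eq_1 f, subst_neg hg.negConj, subst_subst_neg_X hg.negConj, negConj, negConj,
    neg_neg, subst_comp_subst_apply hg hasSubst_neg_X]

theorem negConj_negConj (f : R⟦X⟧) : negConj (negConj f) = f := by
  rw [negConj, negConj, subst_neg hasSubst_neg_X, subst_subst_neg_X hasSubst_neg_X, neg_neg,
    neg_neg, X_subst]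

/-- The middle factors of `(W ∘ B) ∘ (W̄ ∘ B̄)` cancel because `B ∘ W̄` is the conjugate
of `B̄ ∘ W`. -/
theorem subst_negConj_subst_eq_X {B W : R⟦X⟧} (hB : HasSubst B) (hW : HasSubst W)
    (h₁ : subst W (negConj B) = X) (h₂ : subst (negConj B) W = X) :
    subst (negConj (subst B W)) (subst B W) = X ∧
      subst (subst B W) (negConj (subst B W)) = X := by
  have h₁' : subst (negConj W) B = X := by
    rw [← negConj_negConj B, ← negConj_subst hW, h₁, negConj_X]
  have h₂' : subst B (negConj W) = X := by
    rw [← negConj_negConj B, ← negConj_subst hB.negConj, h₂, negConj_X]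
  rw [negConj_subst hB]
  constructor
  · rw [subst_comp_subst_apply hB (hW.negConj.subst hB.negConj),
      ← subst_comp_subst_apply hW.negConj hB.negConj, h₁', subst_X hB.negConj, h₂]
  · rw [subst_comp_subst_apply hB.negConj (hW.subst hB),
      ← subst_comp_subst_apply hW hB, h₁, subst_X hB, h₂']

end CommRing

section Exp

variable {A : Type*} [CommRing A] [Algebra ℚ A]

theorem derivative_subst_exp {a : A⟦X⟧} (ha : HasSubst a) :
    d⁄dX A (subst a (exp A)) = subst a (exp A) * d⁄dX A a := by
  rw [derivative_subst ha, derivative_exp]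

theorem constantCoeff_subst_exp {a : A⟦X⟧} (ha : constantCoeff a = 0) :
    constantCoeff (subst a (exp A)) = 1 := by
  rw [constantCoeff_subst_of_constantCoeff_zero ha, constantCoeff_exp]

theorem subst_exp_mul_subst_exp_neg {a : A⟦X⟧} (ha : constantCoeff a = 0) :
    subst a (exp A) * subst (-a) (exp A) = 1 := by
  have := IsAddTorsionFree.of_module_rat A
  have ha' : constantCoeff (-a) = 0 := by rw [map_neg, ha, neg_zero]
  refine derivative.ext ?_ ?_
  · rw [Derivation.leibniz, derivative_subst_exp (.of_constantCoeff_zero' ha),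
      derivative_subst_exp (.of_constantCoeff_zero' ha'), map_neg, derivative_one,
      smul_eq_mul, smul_eq_mul]
    ring
  · rw [map_mul, constantCoeff_subst_exp ha, constantCoeff_subst_exp ha', map_one, one_mul]

theorem subst_exp_add {a b : A⟦X⟧} (ha : constantCoeff a = 0) (hb : constantCoeff b = 0) :
    subst (a + b) (exp A) = subst a (exp A) * subst b (exp A) := by
  have := IsAddTorsionFree.of_module_rat A
  have hab : constantCoeff (a + b) = 0 := by rw [map_add, ha, hb, add_zero]
  have hna : constantCoeff (-a) = 0 := by rw [map_neg, ha, neg_zero]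
  have hnb : constantCoeff (-b) = 0 := by rw [map_neg, hb, neg_zero]
  have hprod : subst (a + b) (exp A) * subst (-a) (exp A) * subst (-b) (exp A) = 1 := by
    refine derivative.ext ?_ ?_
    · simp only [Derivation.leibniz, smul_eq_mul, map_neg, map_add, derivative_one,
        derivative_subst_exp (.of_constantCoeff_zero' hab),
        derivative_subst_exp (.of_constantCoeff_zero' hna),
        derivative_subst_exp (.of_constantCoeff_zero' hnb)]
      ring
    · simp only [map_mul, constantCoeff_subst_exp hab, constantCoeff_subst_exp hna,
        constantCoeff_subst_exp hnb, map_one, mul_one]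
  linear_combination (-subst (a + b) (exp A) * (subst b (exp A) * subst (-b) (exp A))) *
      subst_exp_mul_subst_exp_neg ha - subst (a + b) (exp A) * subst_exp_mul_subst_exp_neg hb +
    subst a (exp A) * subst b (exp A) * hprod

theorem subst_X_mul_negConj_X_mul_exp {U V : A⟦X⟧} (h : U = V * subst (X * U) (exp A)) :
    subst (X * U) (negConj (X * exp A)) = X * V := by
  have hXU : constantCoeff (X * U) = 0 := by simp
  rw [negConj_X_mul, subst_X_mul (.of_constantCoeff_zero' hXU),
    subst_subst_neg_X (.of_constantCoeff_zero' hXU)]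
  linear_combination X * subst (-(X * U)) (exp A) * h + X * V * subst_exp_mul_subst_exp_neg hXU

end Exp

end PowerSeries

theorem comp_eq_subst {f g : ℚ⟦X⟧} (hg : constantCoeff g = 0) : comp f g = subst g f := by
  ext n
  rw [comp, coeff_mk, coeff_subst' (.of_constantCoeff_zero' hg),
    finsum_eq_sum_of_support_subset (s := Finset.range (n + 1))]
  · rfl
  intro d hd
  contrapose! hd
  rw [Finset.coe_range, Set.mem_Iio, not_lt] at hd
  have : X ^ d ∣ g ^ d := pow_dvd_pow_of_dvd (X_dvd_iff.mpr hg) d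
  simp [X_pow_dvd_iff.mp this n (by omega)]

theorem pseudoInvolutory_iff {f : ℚ⟦X⟧} (hf : constantCoeff f = 0) :
    PseudoInvolutory f ↔ subst (negConj f) f = X ∧ subst f (negConj f) = X := by
  have hf' : constantCoeff (negConj f) = 0 := by rw [constantCoeff_negConj, hf, neg_zero]
  rw [PseudoInvolutory, comp_eq_subst (f := f) (g := -X) (by simp), ← negConj.eq_1,
    comp_eq_subst hf', comp_eq_subst hf]

theorem marked_forests_pseudo_involutory_general (S T : PowerSeries ℚ)
    (hS : S = comp (PowerSeries.exp ℚ) (X * (1 + S)))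
    (hT : T = comp (PowerSeries.exp ℚ) (X * T)) :
    X * S = comp (X * T) (X * PowerSeries.exp ℚ) ∧ PseudoInvolutory (X * S) := by
  have hX (f : ℚ⟦X⟧) : constantCoeff (X * f) = 0 := by simp
  rw [comp_eq_subst (hX _)] at hS hT ⊢
  have hB₁ : IsUnit (coeff 1 (negConj (X * exp ℚ))) := by
    simp [negConj_X_mul, constantCoeff_subst_exp]
  have h₁ : subst (X * T) (negConj (X * exp ℚ)) = X := by
    simpa using subst_X_mul_negConj_X_mul_exp (U := T) (V := 1) (by rwa [one_mul])
  have hB : constantCoeff (negConj (X * exp ℚ)) = 0 := by rw [constantCoeff_negConj, hX, neg_zero]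
  have h₂ : subst (negConj (X * exp ℚ)) (X * T) = X :=
    subst_eq_X_of_subst_eq_X hB hB₁ (.of_constantCoeff_zero' (hX T)) h₁
  have hS' : S = exp ℚ * subst (X * S) (exp ℚ) := by
    conv_lhs => rw [hS, mul_one_add, subst_exp_add (by simp) (hX S), X_subst]
  have hXS : X * S = subst (X * exp ℚ) (X * T) :=
    eq_subst_of_subst_eq_X (.of_constantCoeff_zero' (hX S)) (.of_constantCoeff_zero' hB) h₂
      (subst_X_mul_negConj_X_mul_exp hS')
  refine ⟨hXS, (pseudoInvolutory_iff (hX S)).2 ?_⟩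
  rw [hXS]
  exact subst_negConj_subst_eq_X (.of_constantCoeff_zero' (hX _)) (.of_constantCoeff_zero' (hX T))
    h₁ h₂

/-- Let `S(0) = 1` satisfy `S = e^{z(1+S)}`.  Then `z·S = (z·T) ∘ (z·e^z)`,
where `T = e^{zT}` is the rooted labeled tree series, and `z·S` is
pseudo-involutory. -/
theorem marked_forests_pseudo_involutory (S T : PowerSeries ℚ)
    (hS0 : PowerSeries.constantCoeff (R := ℚ) S = 1)
    (hT0 : PowerSeries.constantCoeff (R := ℚ) T = 1)
    (hS : S = comp (PowerSeries.exp ℚ) (X * (1 + S)))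
    (hT : T = comp (PowerSeries.exp ℚ) (X * T)) :
    X * S = comp (X * T) (X * PowerSeries.exp ℚ) ∧ PseudoInvolutory (X * S) :=
  marked_forests_pseudo_involutory_general S T hS hT
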